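/- Proposition (incidence, odd case): let n ≥ 3 be odd and let z = σ ∘ p 0 1 (apply the contextual inversion p 0 1 first, then the cyclic shift σ), viewed as a permutation of Fin n → ZMod 12. Then z^(2n) = id, while z^n ≠ id. -/

import Mathlib

/-- Contextual inversion `p i j` on pitch-class segments of length `n`. -/
def p {n : ℕ} (i j : Fin n) (x : Fin n → ZMod 12) : Fin n → ZMod 12 :=
  fun r => x i + x j - x r

/-- Contextual inversion `p i j` as a permutation (it is an involution). -/
def pEquiv {n : ℕ} (i j : Fin n) : Equiv.Perm (Fin n → ZMod 12) where
  toFun := p i j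
  invFun := p i j
  left_inv x := by funext r; simp only [p]; ring
  right_inv x := by funext r; simp only [p]; ring

/-- The cyclic shift `σ`, `(σ x) r = x (r + 1)`, as a permutation. -/
def sigmaEquiv {n : ℕ} [NeZero n] : Equiv.Perm (Fin n → ZMod 12) where
  toFun x := fun r => x (r + 1)
  invFun x := fun r => x (r - 1)
  left_inv x := by funext r; simp
  right_inv x := by funext r; simp

/-!
Writing `z = σ ∘ p 0 1`, induction on `k` gives the closed form
`(z ^ k x) r = x 0 + (-1) ^ k * (x (r + k) - x k)`. As `n = 0` in `Fin n`, `z ^ (2 * n)` is the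
identity, while for odd `n` the sign flips and `z ^ n = p 0 0`, which negates the indicator of `1`.
-/

open Fin.NatCast Fin.CommRing

lemma sigmaEquiv_mul_pEquiv_apply {n : ℕ} [NeZero n] (i j : Fin n) (x : Fin n → ZMod 12)
    (r : Fin n) :
    (sigmaEquiv * pEquiv i j : Equiv.Perm (Fin n → ZMod 12)) x r = x i + x j - x (r + 1) :=
  rfl

lemma pEquiv_apply {n : ℕ} (i j : Fin n) (x : Fin n → ZMod 12) (r : Fin n) :
    pEquiv i j x r = x i + x j - x r :=
  rfl

lemma pow_sigmaEquiv_mul_pEquiv_apply {n : ℕ} [NeZero n] (k : ℕ) (x : Fin n → ZMod 12)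
    (r : Fin n) :
    ((sigmaEquiv * pEquiv 0 1) ^ k : Equiv.Perm (Fin n → ZMod 12)) x r =
      x 0 + (-1) ^ k * (x (r + k) - x k) := by
  induction k generalizing r with
  | zero => simp
  | succ k ih =>
    rw [pow_succ', Equiv.Perm.mul_apply, sigmaEquiv_mul_pEquiv_apply, ih, ih, ih]
    have hk : ((k + 1 : ℕ) : Fin n) = k + 1 := by push_cast; rfl
    rw [hk, zero_add, add_assoc r 1, add_comm 1 (k : Fin n)]
    ring

lemma pow_two_mul_sigmaEquiv_mul_pEquiv (n : ℕ) [NeZero n] :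
    (sigmaEquiv (n := n) * pEquiv 0 1) ^ (2 * n) = 1 := by
  ext x r
  rw [pow_sigmaEquiv_mul_pEquiv_apply, pow_mul, neg_one_sq, one_pow, Nat.cast_mul,
    Fin.natCast_self, mul_zero, add_zero, Equiv.Perm.one_apply]
  ring

lemma pow_sigmaEquiv_mul_pEquiv_of_odd {n : ℕ} [NeZero n] (hodd : Odd n) :
    (sigmaEquiv (n := n) * pEquiv 0 1) ^ n = pEquiv 0 0 := by
  ext x r
  rw [pow_sigmaEquiv_mul_pEquiv_apply, hodd.neg_one_pow, Fin.natCast_self, add_zero,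
    pEquiv_apply]
  ring

lemma pEquiv_self_ne_one {n : ℕ} {i j : Fin n} (hij : i ≠ j) : pEquiv i i ≠ 1 := by
  intro h
  have hj := congr_fun (congr_arg (· (Pi.single j 1)) h) j
  simp only [pEquiv_apply, Pi.single_eq_same, Pi.single_eq_of_ne hij, Equiv.Perm.one_apply] at hj
  exact absurd hj (by decide)

theorem stmt17 (n : ℕ) [NeZero n] (hn : 3 ≤ n) (hodd : Odd n) :
    (sigmaEquiv (n := n) * pEquiv 0 1) ^ (2 * n) = 1 ∧
      (sigmaEquiv (n := n) * pEquiv 0 1) ^ n ≠ 1 := by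
  have h01 : (0 : Fin n) ≠ 1 := by
    rw [ne_comm, Ne, Fin.one_eq_zero_iff]
    omega
  exact ⟨pow_two_mul_sigmaEquiv_mul_pEquiv n,
    pow_sigmaEquiv_mul_pEquiv_of_odd hodd ▸ pEquiv_self_ne_one h01⟩
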